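/- arXiv:1412.7834 — 5 statements merged into one kernel-verified Lean document; each statement's English description precedes it below -/
import Mathlib

section
/- Let S be a finite set of steps, U a set of users, and A : U → Set S an authorisation relation. Let X be a finite set and P : S → X a surjective function (a complete pattern). Let G be the bipartite graph on parts X and U whose edge set is E = {(x,u) : for every s ∈ S with P(s) = x, s ∈ A(u)}. Then G has a matching of size |X| (equivalently, there exists an injective function f : X → U with (x, f(x)) ∈ E for every x ∈ X) if and only if there exists a function π : S → U such that s ∈ A(π(s)) for every s ∈ S, and for all s, t ∈ S one has π(s) = π(t) if and only if P(s) = P(t). -/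
/-- **Theorem 1 (pattern validity via matchings).**
Let `S` be a finite set of steps, `U` a set of users, `A : U → Set S` an authorisation
relation, and `P : S → X` a surjective complete pattern onto a finite set `X`.
The bipartite graph on parts `X` and `U` with edges
`E = {(x,u) : ∀ s, P s = x → s ∈ A u}` has a matching of size `|X|`
(i.e. an injective `f : X → U` with `(x, f x)` an edge for all `x`) if and only if
there is an authorised complete plan `π : S → U` realising the pattern `P`. -/
theorem pattern_authorised_iff_matching
    {S U X : Type*} [Fintype S] [Fintype X]
    (A : U → Set S) (P : S → X) (hP : Function.Surjective P) :
    (∃ f : X → U, Function.Injective f ∧ ∀ x : X, ∀ s : S, P s = x → s ∈ A (f x)) ↔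
      (∃ π : S → U, (∀ s : S, s ∈ A (π s)) ∧ ∀ s t : S, π s = π t ↔ P s = P t) := by
  constructor
  · rintro ⟨f, hf, hfe⟩
    refine ⟨f ∘ P, fun s => hfe (P s) s rfl, fun s t => ?_⟩
    constructor
    · exact fun h => hf h
    · exact fun h => by simp [Function.comp, h]
  · rintro ⟨π, hπ, hreal⟩
    choose g hg using hP
    refine ⟨fun x => π (g x), ?_, ?_⟩
    · intro x y hxy
      have := (hreal (g x) (g y)).mp hxy
      rw [hg x, hg y] at this
      exact this
    · intro x s hs
      have : π s = π (g x) := (hreal s (g x)).mpr (by rw [hg x, hs])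
      show s ∈ A (π (g x)); rw [← this]
      exact hπ s
end

section
/- Let S be a finite set of steps, U a set of users, A : U → Set S an authorisation relation, X a finite set, and P : S → X a surjective function. Let E = {(x,u) ∈ X × U : for every s ∈ S with P(s) = x, s ∈ A(u)}. If f : X → U is an injective function with (x, f(x)) ∈ E for every x ∈ X, then the function π : S → U defined by π(s) = f(P(s)) satisfies: (i) s ∈ A(π(s)) for every s ∈ S, and (ii) for all s, t ∈ S, π(s) = π(t) if and only if P(s) = P(t). In particular π is an authorised complete plan realising P. -/
/-- **Matching to plan.**
Let `S` be a finite set of steps, `U` a set of users, `A : U → Set S` an authorisation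
relation, and `P : S → X` a surjective complete pattern onto a finite set `X`.
If `f : X → U` is injective and `(x, f x)` is an edge of the bipartite graph
`E = {(x,u) : ∀ s, P s = x → s ∈ A u}` for every `x`, then `π := f ∘ P` is an
authorised complete plan realising `P`: every step is assigned an authorised user,
and `π s = π t ↔ P s = P t` for all steps `s, t`. -/
theorem matching_gives_authorised_plan
    {S U X : Type*} [Fintype S] [Fintype X]
    (A : U → Set S) (P : S → X) (hP : Function.Surjective P)
    (f : X → U) (hf : Function.Injective f)
    (hE : ∀ x : X, ∀ s : S, P s = x → s ∈ A (f x)) :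
    (∀ s : S, s ∈ A (f (P s))) ∧ (∀ s t : S, f (P s) = f (P t) ↔ P s = P t) := by
  exact ⟨fun s => hE _ s rfl, fun s t => ⟨fun h => hf h, fun h => congrArg f h⟩⟩
end

section
/- Let S be a finite set of steps, U a set of users, A : U → Set S an authorisation relation, X a finite set, and P : S → X a surjective function. Let E = {(x,u) ∈ X × U : for every s ∈ S with P(s) = x, s ∈ A(u)}. If there exists a function π : S → U such that s ∈ A(π(s)) for every s ∈ S and, for all s, t ∈ S, π(s) = π(t) if and only if P(s) = P(t), then there exists an injective function f : X → U with (x, f(x)) ∈ E for every x ∈ X; that is, the bipartite graph (X ∪ U, E) has a matching of size |X|. -/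
/-- **Plan to matching.**
Let `S` be a finite set of steps, `U` a set of users, `A : U → Set S` an authorisation
relation, and `P : S → X` a surjective complete pattern onto a finite set `X`.
If there is an authorised complete plan `π : S → U` realising `P` (i.e. `s ∈ A (π s)`
for all `s`, and `π s = π t ↔ P s = P t` for all `s, t`), then the bipartite graph
with edge set `E = {(x,u) : ∀ s, P s = x → s ∈ A u}` has a matching of size `|X|`,
i.e. there is an injective `f : X → U` with `(x, f x)` an edge for every `x`. -/
theorem authorised_plan_gives_matching
    {S U X : Type*} [Fintype S] [Fintype X]
    (A : U → Set S) (P : S → X) (hP : Function.Surjective P)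
    (π : S → U) (hauth : ∀ s : S, s ∈ A (π s))
    (hreal : ∀ s t : S, π s = π t ↔ P s = P t) :
    ∃ f : X → U, Function.Injective f ∧ ∀ x : X, ∀ s : S, P s = x → s ∈ A (f x) := by
  refine ⟨π ∘ Function.surjInv hP, ?_, ?_⟩
  · intro x y h
    have := (hreal _ _).mp h
    rwa [Function.surjInv_eq hP, Function.surjInv_eq hP] at this
  · intro x s hs
    have : π s = π (Function.surjInv hP x) := (hreal _ _).mpr (by rw [Function.surjInv_eq hP, hs])
    simpa [Function.comp, ← this] using hauth s
end

section
/- Let G be a bipartite graph with vertex parts X and U (X finite) and edge set E ⊆ X × U. Let M ⊆ E be a matching in G and let x ∈ X be a vertex of X not covered by M. If there exists no M-augmenting path in G starting at x, then G has no matching that covers every vertex of X. -/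
/-- A set `M` of edges of a bipartite graph with parts `X` and `U` is a matching if
no two of its edges share a vertex. -/
def IsBipartiteMatching {X U : Type*} (M : Set (X × U)) : Prop :=
  ∀ e ∈ M, ∀ e' ∈ M, (e.1 = e'.1 ∨ e.2 = e'.2) → e = e'

/-- An `M`-augmenting path starting at `x ∈ X` in the bipartite graph with parts `X`, `U`
and edge set `E`: a path `x = x₀, u₀, x₁, u₁, …, xₙ, uₙ` with pairwise distinct vertices,
whose odd edges `(xᵢ, uᵢ)` lie in `E \ M` and even edges `(xᵢ₊₁, uᵢ)` lie in `M`, and whose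
two endpoints `x₀` and `uₙ` are not covered by `M`. -/
def IsAugmentingPathFrom {X U : Type*} (E M : Set (X × U)) (x : X) : Prop :=
  ∃ (n : ℕ) (xs : Fin (n + 1) → X) (us : Fin (n + 1) → U),
    xs 0 = x ∧
    Function.Injective xs ∧ Function.Injective us ∧
    (∀ i : Fin (n + 1), (xs i, us i) ∈ E ∧ (xs i, us i) ∉ M) ∧
    (∀ i : Fin n, (xs i.succ, us i.castSucc) ∈ M) ∧
    (¬ ∃ u : U, (x, u) ∈ M) ∧ (¬ ∃ y : X, (y, us (Fin.last n)) ∈ M)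

/-- **Proposition (early termination of the Hungarian method).**
Let `G` be a bipartite graph with parts `X` (finite) and `U` and edge set `E ⊆ X × U`.
Let `M ⊆ E` be a matching and let `x ∈ X` be uncovered by `M`. If there is no
`M`-augmenting path in `G` starting at `x`, then `G` has no matching covering every
vertex of `X`. -/
theorem no_augmenting_path_no_perfect_matching
    {X U : Type*} [Fintype X] (E M : Set (X × U))
    (hME : M ⊆ E) (hM : IsBipartiteMatching M)
    (x : X) (hx : ¬ ∃ u : U, (x, u) ∈ M)
    (haug : ¬ IsAugmentingPathFrom E M x) :
    ¬ ∃ M' : Set (X × U), M' ⊆ E ∧ IsBipartiteMatching M' ∧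
        ∀ y : X, ∃ u : U, (y, u) ∈ M' := by
  classical
  rintro ⟨M', hM'E, hM'm, hcov⟩
  apply haug
  choose u' hu' using hcov
  -- step function: the M-partner of u' y, if any
  set F : X → Option X := fun y => if h : ∃ z, (z, u' y) ∈ M then some h.choose else none
    with hF
  set a : ℕ → Option X := fun k => Nat.rec (some x) (fun _ o => o.bind F) k with ha
  have ha0 : a 0 = some x := rfl
  have haS : ∀ k, a (k + 1) = (a k).bind F := fun k => rfl
  have hstep : ∀ k z, a (k + 1) = some z → ∃ y, a k = some y ∧ (z, u' y) ∈ M := by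
    intro k z h
    rw [haS] at h
    rcases ho : a k with _ | y
    · rw [ho] at h; simp at h
    · rw [ho] at h
      refine ⟨y, rfl, ?_⟩
      by_cases hy : ∃ z, (z, u' y) ∈ M
      · have : F y = some hy.choose := by rw [hF]; simp [hy]
        simp only [Option.bind_some] at h
        rw [this] at h
        obtain rfl : hy.choose = z := by injection h
        exact hy.choose_spec
      · have : F y = none := by rw [hF]; simp [hy]
        simp only [Option.bind_some] at h
        rw [this] at h; exact absurd h (by simp)
  have hinj : ∀ i d z, a i = some z → a (i + d) = a i → d = 0 := by
    intro i
    induction i with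
    | zero =>
      intro d z h0 hd
      by_contra hne
      obtain ⟨d', rfl⟩ := Nat.exists_eq_succ_of_ne_zero hne
      rw [Nat.zero_add, ha0] at hd
      obtain ⟨y, _, hz⟩ := hstep d' x hd
      exact hx ⟨u' y, hz⟩
    | succ i ih =>
      intro d z h0 hd
      obtain ⟨y, hy, hzy⟩ := hstep i z h0
      have h1 : a (i + d + 1) = some z := by
        have : i + 1 + d = i + d + 1 := by omega
        rw [← this, hd, h0]
      obtain ⟨q, hq, hzq⟩ := hstep (i + d) z h1
      have hu : u' y = u' q := by
        have := hM _ hzy _ hzq (Or.inl rfl)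
        exact congrArg Prod.snd this
      have hyq : y = q := by
        have := hM'm _ (hu' y) _ (hu' q) (Or.inr hu)
        exact congrArg Prod.fst this
      exact ih d y hy (by rw [hq, ← hyq, hy])
  -- termination
  have hterm : ∃ k, a k = none := by
    by_contra h
    push_neg at h
    have hsome : ∀ k, ∃ z, a k = some z := fun k => Option.ne_none_iff_exists'.mp (h k)
    choose b hb using hsome
    have key : ∀ i j : ℕ, i ≤ j → b i = b j → i = j := by
      intro i j hle hij
      obtain ⟨d, rfl⟩ := Nat.le.dest hle
      have := hinj i d (b i) (hb i) (by rw [hb (i + d), hb i, hij])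
      omega
    obtain ⟨i, j, hne, hij⟩ := Finite.exists_ne_map_eq_of_infinite b
    rcases le_total i j with h1 | h1
    · exact hne (key i j h1 hij)
    · exact hne (key j i h1 hij.symm).symm
  have hknone0 : a (Nat.find hterm) = none := Nat.find_spec hterm
  have hkmin : ∀ m, m < Nat.find hterm → a m ≠ none := fun m hm => Nat.find_min hterm hm
  have hk0 : Nat.find hterm ≠ 0 := by
    intro h; rw [h, ha0] at hknone0; exact absurd hknone0 (by simp)
  obtain ⟨n, hkn⟩ := Nat.exists_eq_succ_of_ne_zero hk0
  have hknone : a (n + 1) = none := by rw [← Nat.succ_eq_add_one, ← hkn]; exact hknone0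
  have hdef : ∀ i : Fin (n + 1), ∃ z, a i = some z := by
    intro i
    exact Option.ne_none_iff_exists'.mp (hkmin i (by omega))
  choose xs hxs using hdef
  refine ⟨n, xs, fun i => u' (xs i), ?_, ?_, ?_, ?_, ?_, hx, ?_⟩
  · have := hxs 0
    rw [Fin.val_zero, ha0] at this
    injection this.symm
  · -- injective xs
    intro i j hij
    have key : ∀ i j : Fin (n + 1), (i : ℕ) ≤ (j : ℕ) → xs i = xs j → i = j := by
      intro i j hle hij
      obtain ⟨d, hd⟩ := Nat.le.dest hle
      have := hinj i d (xs i) (hxs i) (by rw [hd, hxs j, hxs i, hij])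
      exact Fin.ext (by omega)
    rcases le_total (i : ℕ) (j : ℕ) with h1 | h1
    · exact key i j h1 hij
    · exact (key j i h1 hij.symm).symm
  · -- injective us
    intro i j hij
    have hxij : xs i = xs j := by
      have := hM'm _ (hu' (xs i)) _ (hu' (xs j)) (Or.inr hij)
      exact congrArg Prod.fst this
    -- reuse xs injectivity inline
    have key : ∀ i j : Fin (n + 1), (i : ℕ) ≤ (j : ℕ) → xs i = xs j → i = j := by
      intro i j hle hij
      obtain ⟨d, hd⟩ := Nat.le.dest hle
      have := hinj i d (xs i) (hxs i) (by rw [hd, hxs j, hxs i, hij])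
      exact Fin.ext (by omega)
    rcases le_total (i : ℕ) (j : ℕ) with h1 | h1
    · exact key i j h1 hxij
    · exact (key j i h1 hxij.symm).symm
  · intro i
    refine ⟨hM'E (hu' (xs i)), ?_⟩
    intro hmem
    rcases hi : (i : ℕ) with _ | m
    · have hi0 : i = 0 := Fin.ext (by simp [hi])
      have hx0 : xs i = x := by
        have := hxs i
        rw [hi, ha0] at this
        injection this.symm
      exact hx ⟨u' (xs i), hx0 ▸ hmem⟩
    · have : a (m + 1) = some (xs i) := by rw [← hi]; exact hxs i
      obtain ⟨y, hy, hzy⟩ := hstep m (xs i) this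
      have hu : u' y = u' (xs i) := congrArg Prod.snd (hM _ hzy _ hmem (Or.inl rfl))
      have hyx : y = xs i := congrArg Prod.fst (hM'm _ (hu' y) _ (hu' (xs i)) (Or.inr hu))
      have : a (m + 1) = a m := by rw [this, hy, hyx]
      have := hinj m 1 y hy (by rw [this, hy])
      omega
  · intro i
    have hsv : ((i.succ : Fin (n + 1)) : ℕ) = (i : ℕ) + 1 := rfl
    have h1 : a ((i : ℕ) + 1) = some (xs i.succ) := by rw [← hsv]; exact hxs i.succ
    obtain ⟨y, hy, hzy⟩ := hstep (i : ℕ) (xs i.succ) h1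
    have hcv : ((i.castSucc : Fin (n + 1)) : ℕ) = (i : ℕ) := rfl
    have h2 : a (i : ℕ) = some (xs i.castSucc) := by rw [← hcv]; exact hxs i.castSucc
    have : y = xs i.castSucc := by rw [hy] at h2; injection h2
    show (xs i.succ, u' (xs i.castSucc)) ∈ M
    rwa [← this]
  · -- last vertex uncovered
    intro ⟨y, hy⟩
    have hlast : a n = some (xs (Fin.last n)) := by
      have := hxs (Fin.last n)
      rwa [Fin.val_last] at this
    have : a (n + 1) = F (xs (Fin.last n)) := by rw [haS, hlast, Option.bind_some]
    rw [hknone] at this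
    have hex : ∃ z, (z, u' (xs (Fin.last n))) ∈ M := ⟨y, hy⟩
    rw [hF] at this
    simp only [hex, dif_pos] at this
    exact absurd this.symm (by simp)
end

section
/- Let G be a bipartite graph with vertex parts X and U (X finite) and edge set E ⊆ X × U. Let M ⊆ E be a matching in G, let M' ⊆ E be a matching that covers every vertex of X, and let x ∈ X be a vertex not covered by M. Then there exists an M-augmenting path in G starting at x. -/
lemma aux_main {X U : Type*} [Fintype X] : ∀ (n : ℕ) (E M M' : Set (X × U)),
    M ⊆ E → IsBipartiteMatching M → M' ⊆ E → IsBipartiteMatching M' →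
    (∀ y : X, ∀ v : U, (y, v) ∈ M → ∃ w : U, (y, w) ∈ M') →
    ∀ x : X, (∃ u : U, (x, u) ∈ M') → (¬ ∃ u : U, (x, u) ∈ M) →
    {y : X | ∃ u : U, (y, u) ∈ M}.ncard ≤ n →
    IsAugmentingPathFrom E M x := by
  intro n
  induction n with
  | zero =>
    intro E M M' hME hM hM'E hM' hcov x hxM' hx hcard
    obtain ⟨u, hu⟩ := hxM'
    refine ⟨0, fun _ => x, fun _ => u, rfl, fun i j _ => Fin.ext (by omega),
      fun i j _ => Fin.ext (by omega), fun i => ⟨hM'E hu, fun h => hx ⟨u, h⟩⟩,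
      fun i => i.elim0, hx, ?_⟩
    rintro ⟨y, hy⟩
    have hmem : y ∈ {y : X | ∃ u : U, (y, u) ∈ M} := ⟨_, hy⟩
    have h0 : {y : X | ∃ u : U, (y, u) ∈ M} = ∅ :=
      (Set.ncard_eq_zero (Set.toFinite _)).mp (Nat.le_zero.mp hcard)
    simp [h0] at hmem
  | succ n ih =>
    intro E M M' hME hM hM'E hM' hcov x hxM' hx hcard
    obtain ⟨u, hu⟩ := hxM'
    by_cases hcovu : ∃ y : X, (y, u) ∈ M
    · obtain ⟨x₁, hx₁⟩ := hcovu
      have hx₁x : x₁ ≠ x := fun h => hx ⟨u, h ▸ hx₁⟩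
      -- restricted graph
      set E₁ : Set (X × U) := {e ∈ E | e.1 ≠ x ∧ e.2 ≠ u} with hE₁
      set M₁ : Set (X × U) := {e ∈ M | e.1 ≠ x ∧ e.2 ≠ u} with hM₁def
      set M₁' : Set (X × U) := {e ∈ M' | e.1 ≠ x ∧ e.2 ≠ u} with hM₁'def
      have hM₁E : M₁ ⊆ E₁ := fun e he => ⟨hME he.1, he.2⟩
      have hM₁'E : M₁' ⊆ E₁ := fun e he => ⟨hM'E he.1, he.2⟩
      have hM₁m : IsBipartiteMatching M₁ := fun e he e' he' h => hM e he.1 e' he'.1 h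
      have hM₁'m : IsBipartiteMatching M₁' := fun e he e' he' h => hM' e he.1 e' he'.1 h
      have hfst : ∀ e ∈ M, e.1 ≠ x := by
        rintro ⟨y, v⟩ he rfl; exact hx ⟨v, he⟩
      have hsnd : ∀ e ∈ M, e.2 = u → e = (x₁, u) := fun e he h2 =>
        hM e he (x₁, u) hx₁ (Or.inr h2)
      have hMtoM₁ : ∀ e ∈ M, e ≠ (x₁, u) → e ∈ M₁ := by
        intro e he hne
        exact ⟨he, hfst e he, fun h2 => hne (hsnd e he h2)⟩
      have hcov₁ : ∀ y : X, ∀ v : U, (y, v) ∈ M₁ → ∃ w : U, (y, w) ∈ M₁' := by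
        rintro y v ⟨hyv, hy1, hy2⟩
        obtain ⟨w, hw⟩ := hcov y v hyv
        exact ⟨w, hw, hy1, fun hwu =>
          hy1 (congrArg Prod.fst (hM' (y, w) hw (x, u) hu (Or.inr hwu)))⟩
      have hx₁M₁' : ∃ w : U, (x₁, w) ∈ M₁' := by
        obtain ⟨w, hw⟩ := hcov x₁ u hx₁
        exact ⟨w, hw, hx₁x, fun hwu =>
          hx₁x (congrArg Prod.fst (hM' (x₁, w) hw (x, u) hu (Or.inr hwu)))⟩
      have hx₁M₁ : ¬ ∃ v : U, (x₁, v) ∈ M₁ := by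
        rintro ⟨v, hv, -, hvu⟩
        exact hvu (congrArg Prod.snd (hM (x₁, v) hv (x₁, u) hx₁ (Or.inl rfl)))
      have hcard₁ : {y : X | ∃ v : U, (y, v) ∈ M₁}.ncard ≤ n := by
        have hsub : {y : X | ∃ v : U, (y, v) ∈ M₁} ⊆
            {y : X | ∃ v : U, (y, v) ∈ M} \ {x₁} := by
          rintro y ⟨v, hv⟩
          refine ⟨⟨v, hv.1⟩, fun hy => ?_⟩
          simp only [Set.mem_singleton_iff] at hy
          exact hx₁M₁ ⟨v, hy ▸ hv⟩
        have h1 : {y : X | ∃ v : U, (y, v) ∈ M₁}.ncard ≤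
            ({y : X | ∃ v : U, (y, v) ∈ M} \ {x₁}).ncard :=
          Set.ncard_le_ncard hsub (Set.toFinite _)
        have h2 : ({y : X | ∃ v : U, (y, v) ∈ M} \ {x₁}).ncard <
            {y : X | ∃ v : U, (y, v) ∈ M}.ncard :=
          Set.ncard_diff_singleton_lt_of_mem ⟨u, hx₁⟩ (Set.toFinite _)
        omega
      obtain ⟨m, xs, us, h0, hxsi, husi, hedge, hmatch, -, hlast⟩ :=
        ih E₁ M₁ M₁' hM₁E hM₁m hM₁'E hM₁'m hcov₁ x₁ hx₁M₁' hx₁M₁ hcard₁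
      -- coordinates of the inner path avoid x and u
      have hxsne : ∀ i, xs i ≠ x := fun i => (hedge i).1.2.1
      have husne : ∀ i, us i ≠ u := fun i => (hedge i).1.2.2
      refine ⟨m + 1, Fin.cons x xs, Fin.cons u us, Fin.cons_zero _ _, ?_, ?_, ?_, ?_, hx, ?_⟩
      · -- injectivity of xs'
        intro i j h
        induction i using Fin.cases with
        | zero =>
          induction j using Fin.cases with
          | zero => rfl
          | succ j => rw [Fin.cons_zero, Fin.cons_succ] at h; exact absurd h.symm (hxsne j)
        | succ i =>
          induction j using Fin.cases with
          | zero => rw [Fin.cons_zero, Fin.cons_succ] at h; exact absurd h (hxsne i)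
          | succ j =>
            rw [Fin.cons_succ, Fin.cons_succ] at h
            exact congrArg Fin.succ (hxsi h)
      · intro i j h
        induction i using Fin.cases with
        | zero =>
          induction j using Fin.cases with
          | zero => rfl
          | succ j => rw [Fin.cons_zero, Fin.cons_succ] at h; exact absurd h.symm (husne j)
        | succ i =>
          induction j using Fin.cases with
          | zero => rw [Fin.cons_zero, Fin.cons_succ] at h; exact absurd h (husne i)
          | succ j =>
            rw [Fin.cons_succ, Fin.cons_succ] at h
            exact congrArg Fin.succ (husi h)
      · -- edges in E \ M
        intro i
        induction i using Fin.cases with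
        | zero =>
          simp only [Fin.cons_zero]
          exact ⟨hM'E hu, fun h => hx ⟨u, h⟩⟩
        | succ i =>
          simp only [Fin.cons_succ]
          refine ⟨(hedge i).1.1, fun h => (hedge i).2 ?_⟩
          exact ⟨h, hxsne i, husne i⟩
      · -- matching edges
        intro i
        induction i using Fin.cases with
        | zero =>
          have h1 : (0 : Fin (m + 1)).succ = Fin.succ 0 := rfl
          have h2 : ((0 : Fin (m + 1)).castSucc) = (0 : Fin (m + 2)) := rfl
          rw [h1, h2, Fin.cons_succ, Fin.cons_zero, h0]
          exact hx₁
        | succ i =>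
          have h1 : (Fin.succ i : Fin (m + 1)).succ = Fin.succ (i.succ) := rfl
          have h2 : (Fin.succ i : Fin (m + 1)).castSucc = Fin.succ (i.castSucc) :=
            (Fin.succ_castSucc i).symm
          rw [h1, h2, Fin.cons_succ, Fin.cons_succ]
          exact (hmatch i).1
      · -- last vertex uncovered
        have hl : Fin.last (m + 1) = Fin.succ (Fin.last m) := (Fin.succ_last m).symm
        rw [hl, Fin.cons_succ]
        rintro ⟨y, hy⟩
        refine hlast ⟨y, hy, ?_, husne _⟩
        rintro rfl
        exact hx ⟨_, hy⟩
    · -- u uncovered: length-0 path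
      exact ⟨0, fun _ => x, fun _ => u, rfl, fun i j _ => Fin.ext (by omega),
        fun i j _ => Fin.ext (by omega), fun i => ⟨hM'E hu, fun h => hx ⟨u, h⟩⟩,
        fun i => i.elim0, hx, hcovu⟩

/-- **Key step via symmetric difference.**
Let `G` be a bipartite graph with parts `X` (finite) and `U` and edge set `E ⊆ X × U`.
Let `M ⊆ E` be a matching, let `M' ⊆ E` be a matching covering every vertex of `X`,
and let `x ∈ X` be uncovered by `M`. Then there is an `M`-augmenting path in `G`
starting at `x`. -/
theorem exists_augmenting_path_of_saturating_matching
    {X U : Type*} [Fintype X] (E M M' : Set (X × U))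
    (hME : M ⊆ E) (hM : IsBipartiteMatching M)
    (hM'E : M' ⊆ E) (hM' : IsBipartiteMatching M')
    (hcov : ∀ y : X, ∃ u : U, (y, u) ∈ M')
    (x : X) (hx : ¬ ∃ u : U, (x, u) ∈ M) :
    IsAugmentingPathFrom E M x :=
  aux_main {y : X | ∃ u : U, (y, u) ∈ M}.ncard E M M' hME hM hM'E hM'
    (fun y _ _ => hcov y) x (hcov x) hx le_rfl
end
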